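/- Let μ, ν be probability measures on ℝ with finite first moment with μ ≤_cx ν, and let π̂^{HF} = λ_{(0,1)}(du) δ_{F_μ^{-1}(u)}(dx) δ_{F_ν^{-1}(u)}(dy) be the lifted Hoeffding–Fréchet coupling. Let M̂ = λ_{(0,1)}(du) δ_{F_μ^{-1}(u)}(dx) m_u(dy) be any lifted martingale coupling between μ and ν whose kernel satisfies ∫_ℝ |y − F_ν^{-1}(u)| m_u(dy) = |F_μ^{-1}(u) − F_ν^{-1}(u)| for du-almost all u ∈ (0,1). Then M̂ is a lifted martingale rearrangement coupling of π̂^{HF}, i.e. ÂW₁(π̂^{HF}, M̂) = inf over M̂' ∈ Π̂^M(μ,ν) of ÂW₁(π̂^{HF}, M̂'), and this common value equals ∫_{(0,1)} |F_μ^{-1}(u) − F_ν^{-1}(u)| du. -/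

import Mathlib

/-!
Against the deterministic kernel `δ_{F_ν^{-1}(u)}` the inner `W₁` is just
`∫ |y - F_ν^{-1}(u)| m'_{u'}(dy)`, and since `m'_{u'}` has barycentre `F_μ^{-1}(u')` Jensen's
inequality bounds it below by `|F_μ^{-1}(u') - F_ν^{-1}(u)|`. With the triangle inequality through
`F_μ^{-1}(u')`, the cost of any coupling `χ` of the `u`-variables against any lifted martingale
coupling is at least `∫ |F_μ^{-1} - F_ν^{-1}|`. The identity coupling `u = u'` attains this bound
for `m` precisely because of the assumption on `m`.
-/

open MeasureTheory ProbabilityTheory Set Filter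

noncomputable section

/-- Lebesgue measure restricted to `(0,1)`. -/
def lam01 : Measure ℝ := volume.restrict (Set.Ioo 0 1)

/-- Cumulative distribution function `F_η(x) = η((-∞, x])`. -/
def Fcdf (η : Measure ℝ) (x : ℝ) : ℝ := (η (Set.Iic x)).toReal

/-- Left limit of the cumulative distribution function, `F_η(x-) = η((-∞, x))`. -/
def FcdfL (η : Measure ℝ) (x : ℝ) : ℝ := (η (Set.Iio x)).toReal

/-- Quantile function `F_η^{-1}(u) = inf {x : F_η(x) ≥ u}`. -/
def qf (η : Measure ℝ) (u : ℝ) : ℝ := sInf {x | u ≤ Fcdf η x}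

/-- `π` is a coupling between `μ` and `ν`. -/
def IsCoupling (π : Measure (ℝ × ℝ)) (μ ν : Measure ℝ) : Prop :=
  π.map Prod.fst = μ ∧ π.map Prod.snd = ν

/-- `W_ρ^ρ(η, η')`, the Wasserstein distance of order `ρ` raised to the power `ρ`. -/
def Wr (ρ : ℝ) (η η' : Measure ℝ) : ℝ :=
  sInf {c | ∃ π : Measure (ℝ × ℝ), IsCoupling π η η' ∧ c = ∫ p, |p.1 - p.2| ^ ρ ∂π}

/-- The Wasserstein distance of order `ρ`. -/
def W (ρ : ℝ) (η η' : Measure ℝ) : ℝ := Wr ρ η η' ^ (1 / ρ)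

/-- The stochastic order `η ≤_st η'`: the quantile functions are ordered on `(0,1)`. -/
def StochOrder (η η' : Measure ℝ) : Prop := ∀ u ∈ Set.Ioo (0 : ℝ) 1, qf η u ≤ qf η' u

/-- The convex order `μ ≤_cx ν`: `∫ f dμ ≤ ∫ f dν` for every (integrable) convex `f`. -/
def ConvexOrder (μ ν : Measure ℝ) : Prop :=
  ∀ f : ℝ → ℝ, ConvexOn ℝ Set.univ f → Integrable f μ → Integrable f ν →
    ∫ x, f x ∂μ ≤ ∫ x, f x ∂ν

/-- `AW_ρ^ρ(π, π')`, the adapted Wasserstein distance of order `ρ` raised to the power `ρ`: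
the infimum over couplings `χ` between the first marginals of
`∫ (|x-x'|^ρ + W_ρ^ρ(π_x, π'_{x'})) dχ`, where `κ, κ'` are disintegration kernels of `π, π'`. -/
def AWr (ρ : ℝ) (π π' : Measure (ℝ × ℝ)) : ℝ :=
  sInf {c | ∃ (χ : Measure (ℝ × ℝ)) (κ κ' : Kernel ℝ ℝ),
      IsCoupling χ (π.map Prod.fst) (π'.map Prod.fst) ∧
      π = (π.map Prod.fst).compProd κ ∧ π' = (π'.map Prod.fst).compProd κ' ∧
      c = ∫ q, (|q.1 - q.2| ^ ρ + Wr ρ (κ q.1) (κ' q.2)) ∂χ}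

/-- The adapted Wasserstein distance of order `ρ`. -/
def AW (ρ : ℝ) (π π' : Measure (ℝ × ℝ)) : ℝ := AWr ρ π π' ^ (1 / ρ)

/-- The lifted adapted Wasserstein distance of order `ρ`, raised to the power `ρ`, between the
lifted couplings with first marginals `μ, μ'` and kernels `p, p'`. -/
def lAWr (ρ : ℝ) (μ : Measure ℝ) (p : ℝ → Measure ℝ) (μ' : Measure ℝ)
    (p' : ℝ → Measure ℝ) : ℝ :=
  sInf {c | ∃ χ : Measure (ℝ × ℝ), IsCoupling χ lam01 lam01 ∧
      c = ∫ q, (|q.1 - q.2| ^ ρ + |qf μ q.1 - qf μ' q.2| ^ ρ + Wr ρ (p q.1) (p' q.2)) ∂χ}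

/-- The probability kernel `p` encodes a lifted coupling
`λ_{(0,1)}(du) δ_{F_μ^{-1}(u)}(dx) p_u(dy)` between `μ` and `ν`. -/
def IsLiftedCoupling (μ ν : Measure ℝ) (p : ℝ → Measure ℝ) : Prop :=
  Measurable p ∧ (∀ u, IsProbabilityMeasure (p u)) ∧ lam01.bind p = ν

/-- The probability kernel `m` encodes a lifted martingale coupling between `μ` and `ν`. -/
def IsLiftedMartingale (μ ν : Measure ℝ) (m : ℝ → Measure ℝ) : Prop :=
  IsLiftedCoupling μ ν m ∧ ∀ᵐ u ∂lam01, (∫ y, y ∂(m u)) = qf μ u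

end

instance : IsProbabilityMeasure lam01 := ⟨by simp [lam01]⟩

section Quantile

variable {μ : Measure ℝ} [IsProbabilityMeasure μ]

lemma Fcdf_eq_cdf : Fcdf μ = cdf μ := by
  ext x
  rw [Fcdf, cdf_eq_real, measureReal_def]

lemma qf_le_iff {u : ℝ} (hu : u ∈ Ioo 0 1) (x : ℝ) : qf μ u ≤ x ↔ u ≤ Fcdf μ x := by
  rw [qf, Fcdf_eq_cdf]
  have hbdd : BddBelow {x | u ≤ cdf μ x} := by
    obtain ⟨z, hz⟩ := ((tendsto_cdf_atBot μ).eventually_lt_const hu.1).exists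
    exact ⟨z, fun y hy =>
      le_of_not_gt fun hyz => ((cdf μ).mono hyz.le |>.trans_lt hz).not_ge hy⟩
  have hne : {x | u ≤ cdf μ x}.Nonempty :=
    let ⟨y, hy⟩ := ((tendsto_cdf_atTop μ).eventually_const_lt hu.2).exists
    ⟨y, hy.le⟩
  refine ⟨fun h => ?_, fun h => csInf_le hbdd h⟩
  have hright : ∀ y, x < y → u ≤ cdf μ y := fun y hy =>
    let ⟨s, hs, hsy⟩ := (csInf_lt_iff hbdd hne).1 (h.trans_lt hy)
    hs.trans ((cdf μ).mono hsy.le)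
  refine ge_of_tendsto ((cdf μ).right_continuous x |>.mono_left
    (nhdsWithin_mono _ Ioi_subset_Ici_self)) ?_
  filter_upwards [self_mem_nhdsWithin] with y hy using hright y hy

lemma monotoneOn_qf : MonotoneOn (qf μ) (Ioo 0 1) := fun _ hu _ hv huv =>
  (qf_le_iff hu _).2 (huv.trans ((qf_le_iff hv _).1 le_rfl))

-- Off `(0,1]` the set defining `qf` is all of `ℝ` or empty, and `sInf` returns the junk value `0`.
lemma qf_eq_zero_of_notMem_Ioc {u : ℝ} (hu : u ∉ Ioc 0 1) : qf μ u = 0 := by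
  rcases not_and_or.1 hu with h0 | h1
  · have : {x | u ≤ cdf μ x} = univ :=
      eq_univ_of_forall fun x => (not_lt.1 h0).trans (cdf_nonneg μ x)
    rw [qf, Fcdf_eq_cdf, this]
    exact Real.sInf_of_not_bddBelow fun ⟨b, hb⟩ => by linarith [hb (mem_univ (b - 1))]
  · have : {x | u ≤ cdf μ x} = ∅ :=
      eq_empty_of_forall_notMem fun x hx => h1 ((cdf_le_one μ x).trans' hx)
    rw [qf, Fcdf_eq_cdf, this, Real.sInf_empty]

@[fun_prop]
lemma measurable_qf : Measurable (qf μ) := by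
  refine measurable_of_restrict_of_restrict_compl measurableSet_Ioo
    (Monotone.measurable fun u v huv => monotoneOn_qf u.2 v.2 huv) ?_
  have : (Ioo (0 : ℝ) 1)ᶜ.domRestrict (qf μ) =
      fun u : ↥(Ioo (0 : ℝ) 1)ᶜ => if (u : ℝ) = 1 then qf μ 1 else 0 := by
    ext ⟨u, hu⟩
    split_ifs with h
    · exact congrArg (qf μ) h
    · exact qf_eq_zero_of_notMem_Ioc fun h' => hu ⟨h'.1, lt_of_le_of_ne h'.2 h⟩
  rw [this]
  exact Measurable.ite (measurableSet_eq_fun measurable_subtype_coe measurable_const)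
    measurable_const measurable_const

lemma lam01_Iic {c : ℝ} (hc : c ≤ 1) : lam01 (Iic c) = ENNReal.ofReal c := by
  rw [lam01, Measure.restrict_congr_set Ioo_ae_eq_Ioc, Measure.restrict_apply measurableSet_Iic,
    Iic_inter_Ioc_of_le hc, Real.volume_Ioc, sub_zero]

lemma map_qf : lam01.map (qf μ) = μ := by
  have := Measure.isProbabilityMeasure_map (μ := lam01) (measurable_qf (μ := μ)).aemeasurable
  refine Measure.ext_of_Iic _ _ fun x => ?_
  have hpre : qf μ ⁻¹' Iic x ∩ Ioo 0 1 = Iic (Fcdf μ x) ∩ Ioo 0 1 := by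
    ext u
    simp only [mem_inter_iff, mem_preimage, mem_Iic]
    exact ⟨fun ⟨h, hu⟩ => ⟨(qf_le_iff hu x).1 h, hu⟩,
      fun ⟨h, hu⟩ => ⟨(qf_le_iff hu x).2 h, hu⟩⟩
  rw [Measure.map_apply measurable_qf measurableSet_Iic, lam01,
    Measure.restrict_apply (measurable_qf measurableSet_Iic), hpre,
    ← Measure.restrict_apply measurableSet_Iic, ← lam01,
    lam01_Iic (Fcdf_eq_cdf (μ := μ) ▸ cdf_le_one μ x), Fcdf,
    ENNReal.ofReal_toReal (measure_ne_top _ _)]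

lemma integrable_qf (hμ : Integrable (fun x => |x|) μ) : Integrable (qf μ) lam01 := by
  have : Integrable id (lam01.map (qf μ)) := by
    rw [map_qf]
    exact (integrable_norm_iff aestronglyMeasurable_id).1 hμ
  exact this.comp_measurable measurable_qf

end Quantile

lemma Wr_nonneg (ρ : ℝ) (η η' : Measure ℝ) : 0 ≤ Wr ρ η η' :=
  Real.sInf_nonneg fun _ ⟨_, _, hc⟩ => hc ▸ integral_nonneg fun _ => by positivity

lemma Wr_one_dirac (a : ℝ) (η : Measure ℝ) [IsProbabilityMeasure η] :
    Wr 1 (Measure.dirac a) η = ∫ y, |y - a| ∂η := by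
  have hcost : ∀ π : Measure (ℝ × ℝ), IsCoupling π (Measure.dirac a) η →
      ∫ p, |p.1 - p.2| ^ (1 : ℝ) ∂π = ∫ y, |y - a| ∂η := by
    rintro π ⟨hfst, hsnd⟩
    have hfst_ae : ∀ᵐ p ∂π, p.1 = a :=
      ae_of_ae_map measurable_fst.aemeasurable (hfst ▸ ae_eq_dirac id)
    rw [← hsnd, integral_map measurable_snd.aemeasurable (by fun_prop)]
    refine integral_congr_ae ?_
    filter_upwards [hfst_ae] with p hp
    rw [Real.rpow_one, hp, abs_sub_comm]
  have hset : {c | ∃ π, IsCoupling π (Measure.dirac a) η ∧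
      c = ∫ p, |p.1 - p.2| ^ (1 : ℝ) ∂π} = {∫ y, |y - a| ∂η} := by
    refine eq_singleton_iff_unique_mem.2 ⟨⟨(Measure.dirac a).prod η, ?_, ?_⟩, ?_⟩
    · constructor <;> simp
    · exact (hcost _ (by constructor <;> simp)).symm
    · rintro c ⟨π, hπ, rfl⟩
      exact hcost π hπ
  rw [Wr, hset, csInf_singleton]

lemma isCoupling_map_diag (η : Measure ℝ) : IsCoupling (η.map Function.diag) η η := by
  constructor <;>
    rw [Measure.map_map (by fun_prop) measurable_diag] <;> exact Measure.map_id

lemma measurableEmbedding_diag {α : Type*} [MeasurableSpace α] [MeasurableEq α] :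
    MeasurableEmbedding (Function.diag : α → α × α) :=
  MeasurableEmbedding.of_measurable_inverse measurable_diag
    (by rw [Set.range_diag]; exact measurableSet_diagonal) measurable_fst fun _ => rfl

section LiftedAW

variable {ρ : ℝ} {μ μ' : Measure ℝ} {p p' : ℝ → Measure ℝ}

lemma lAWr_le_of_isCoupling {χ : Measure (ℝ × ℝ)} (hχ : IsCoupling χ lam01 lam01) :
    lAWr ρ μ p μ' p' ≤
      ∫ q, (|q.1 - q.2| ^ ρ + |qf μ q.1 - qf μ' q.2| ^ ρ + Wr ρ (p q.1) (p' q.2)) ∂χ := by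
  refine csInf_le ⟨0, ?_⟩ ⟨χ, hχ, rfl⟩
  rintro _ ⟨χ, -, rfl⟩
  exact integral_nonneg fun q => by have := Wr_nonneg ρ (p q.1) (p' q.2); positivity

lemma le_lAWr_of_forall_isCoupling {c : ℝ}
    (h : ∀ χ, IsCoupling χ lam01 lam01 →
      c ≤ ∫ q, (|q.1 - q.2| ^ ρ + |qf μ q.1 - qf μ' q.2| ^ ρ + Wr ρ (p q.1) (p' q.2)) ∂χ) :
    c ≤ lAWr ρ μ p μ' p' :=
  le_csInf ⟨_, _, isCoupling_map_diag lam01, rfl⟩ fun _ ⟨χ, hχ, hc⟩ => hc ▸ h χ hχ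

end LiftedAW

lemma abs_integral_sub_le_integral_abs_sub (η : Measure ℝ) [IsProbabilityMeasure η]
    (hη : Integrable (fun y => y) η) (a : ℝ) : |∫ y, y ∂η - a| ≤ ∫ y, |y - a| ∂η := by
  have hshift : ∫ y, (y - a) ∂η = ∫ y, y ∂η - a := by
    rw [integral_sub hη (integrable_const a), integral_const, probReal_univ, one_smul]
  exact hshift ▸ abs_integral_le_integral_abs

lemma integrable_integral_abs_sub {γ : Type*} [MeasurableSpace γ] {χ : Measure γ}
    (κ : Kernel γ ℝ) [IsMarkovKernel κ] {f : γ → ℝ} (hfm : Measurable f) (hf : Integrable f χ)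
    (hκ : ∀ᵐ q ∂χ, Integrable (fun y => y) (κ q))
    (hκ_abs : Integrable (fun q => ∫ y, |y| ∂κ q) χ) :
    Integrable (fun q => ∫ y, |y - f q| ∂κ q) χ := by
  have hmeas : StronglyMeasurable fun q => ∫ y, |y - f q| ∂κ q :=
    StronglyMeasurable.integral_kernel_prod_right
      (measurable_snd.sub (hfm.comp measurable_fst)).abs.stronglyMeasurable
  refine (hκ_abs.add hf.abs).mono' hmeas.aestronglyMeasurable ?_
  filter_upwards [hκ] with q hq
  rw [Real.norm_eq_abs, abs_of_nonneg (integral_nonneg fun _ => abs_nonneg _)]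
  calc ∫ y, |y - f q| ∂κ q ≤ ∫ y, (|y| + |f q|) ∂κ q :=
        integral_mono (hq.sub (integrable_const _)).abs (hq.abs.add (integrable_const _))
          fun y => abs_sub _ _
    _ = ∫ y, |y| ∂κ q + |f q| := by
        rw [integral_add hq.abs (integrable_const _), integral_const, probReal_univ, one_smul]

lemma IsLiftedCoupling.integrable_kernel {μ ν : Measure ℝ} {p : ℝ → Measure ℝ}
    (hp : IsLiftedCoupling μ ν p) (hν : Integrable (fun x => |x|) ν) :
    (∀ᵐ u ∂lam01, Integrable (fun y => y) (p u)) ∧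
      Integrable (fun u => ∫ y, |y| ∂p u) lam01 := by
  obtain ⟨hp_meas, -, hp_bind⟩ := hp
  let κ : Kernel ℝ ℝ := ⟨p, hp_meas⟩
  have hκν : κ ∘ₘ lam01 = ν := hp_bind
  exact (Measure.integrable_comp_iff aestronglyMeasurable_id).1
    (hκν ▸ (integrable_norm_iff aestronglyMeasurable_id).1 hν : Integrable id (κ ∘ₘ lam01))

lemma integral_abs_qf_sub_qf_le {μ ν : Measure ℝ} [IsProbabilityMeasure μ]
    [IsProbabilityMeasure ν] (hμ : Integrable (fun x => |x|) μ) (hν : Integrable (fun x => |x|) ν)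
    {m : ℝ → Measure ℝ} (hm : IsLiftedMartingale μ ν m) {χ : Measure (ℝ × ℝ)}
    (hχ : IsCoupling χ lam01 lam01) :
    ∫ u in Ioo 0 1, |qf μ u - qf ν u| ≤
      ∫ q, (|q.1 - q.2| ^ (1 : ℝ) + |qf μ q.1 - qf μ q.2| ^ (1 : ℝ) +
        Wr 1 (Measure.dirac (qf ν q.1)) (m q.2)) ∂χ := by
  obtain ⟨hm_int, hm_abs⟩ := hm.1.integrable_kernel hν
  obtain ⟨⟨hm_meas, hm_prob, -⟩, hm_mean⟩ := hm
  obtain ⟨hfst, hsnd⟩ := hχ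
  let κ : Kernel (ℝ × ℝ) ℝ := (⟨m, hm_meas⟩ : Kernel ℝ ℝ).comap Prod.snd measurable_snd
  have : IsMarkovKernel κ := ⟨fun q => hm_prob q.2⟩
  have comp_fst {f : ℝ → ℝ} (hf : Integrable f lam01) :
      Integrable (fun q : ℝ × ℝ => f q.1) χ :=
    (hfst ▸ hf).comp_measurable measurable_fst
  have comp_snd {f : ℝ → ℝ} (hf : Integrable f lam01) :
      Integrable (fun q : ℝ × ℝ => f q.2) χ :=
    (hsnd ▸ hf).comp_measurable measurable_snd
  have ae_snd {P : ℝ → Prop} (hP : ∀ᵐ u ∂lam01, P u) : ∀ᵐ q ∂χ, P q.2 :=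
    ae_of_ae_map measurable_snd.aemeasurable (hsnd ▸ hP)
  have hid : Integrable id lam01 :=
    (continuous_id.integrableOn_Icc (a := 0) (b := 1)).mono_set Ioo_subset_Icc_self
  have hcost : Integrable (fun q : ℝ × ℝ => |q.1 - q.2| + |qf μ q.1 - qf μ q.2| +
      ∫ y, |y - qf ν q.1| ∂m q.2) χ :=
    (((comp_fst hid).sub (comp_snd hid)).abs.add
      ((comp_fst (integrable_qf hμ)).sub (comp_snd (integrable_qf hμ))).abs).add
      (integrable_integral_abs_sub κ (measurable_qf.comp measurable_fst)
        (comp_fst (integrable_qf hν)) (ae_snd hm_int) (comp_snd hm_abs))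
  have hpointwise : ∀ᵐ q ∂χ, |qf μ q.1 - qf ν q.1| ≤
      |q.1 - q.2| + |qf μ q.1 - qf μ q.2| + ∫ y, |y - qf ν q.1| ∂m q.2 := by
    filter_upwards [ae_snd hm_mean, ae_snd hm_int] with q hq_mean hq_int
    have hjensen := abs_integral_sub_le_integral_abs_sub (m q.2) hq_int (qf ν q.1)
    rw [hq_mean] at hjensen
    linarith [abs_sub_le (qf μ q.1) (qf μ q.2) (qf ν q.1), abs_nonneg (q.1 - q.2)]
  calc ∫ u in Ioo 0 1, |qf μ u - qf ν u| = ∫ q, |qf μ q.1 - qf ν q.1| ∂χ := by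
        rw [← lam01, ← hfst, integral_map measurable_fst.aemeasurable (by fun_prop)]
    _ ≤ _ := integral_mono_ae ((comp_fst (integrable_qf hμ)).sub
          (comp_fst (integrable_qf hν))).abs hcost hpointwise
    _ = _ := by simp only [Real.rpow_one, Wr_one_dirac]

lemma lAWr_dirac_le_integral {μ ν : Measure ℝ} {m : ℝ → Measure ℝ}
    (hm : ∀ u, IsProbabilityMeasure (m u)) :
    lAWr 1 μ (fun u => Measure.dirac (qf ν u)) μ m ≤ ∫ u, ∫ y, |y - qf ν u| ∂m u ∂lam01 := by
  refine (lAWr_le_of_isCoupling (isCoupling_map_diag lam01)).trans_eq ?_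
  rw [measurableEmbedding_diag.integral_map]
  simp [Wr_one_dirac]

theorem stmt9_general
    (μ ν : Measure ℝ) [IsProbabilityMeasure μ] [IsProbabilityMeasure ν]
    (hμ1 : Integrable (fun x => |x|) μ) (hν1 : Integrable (fun x => |x|) ν)
    (m : ℝ → Measure ℝ) (hm : IsLiftedMartingale μ ν m)
    (hval : ∀ᵐ u ∂lam01, (∫ y, |y - qf ν u| ∂(m u)) = |qf μ u - qf ν u|) :
    (∀ m' : ℝ → Measure ℝ, IsLiftedMartingale μ ν m' →
      lAWr 1 μ (fun u => Measure.dirac (qf ν u)) μ m ≤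
        lAWr 1 μ (fun u => Measure.dirac (qf ν u)) μ m') ∧
    lAWr 1 μ (fun u => Measure.dirac (qf ν u)) μ m =
      ∫ u in Set.Ioo (0 : ℝ) 1, |qf μ u - qf ν u| := by
  have hlower (m' : ℝ → Measure ℝ) (hm' : IsLiftedMartingale μ ν m') :
      ∫ u in Ioo 0 1, |qf μ u - qf ν u| ≤ lAWr 1 μ (fun u => Measure.dirac (qf ν u)) μ m' :=
    le_lAWr_of_forall_isCoupling fun _ hχ => integral_abs_qf_sub_qf_le hμ1 hν1 hm' hχ
  have hupper : lAWr 1 μ (fun u => Measure.dirac (qf ν u)) μ m ≤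
      ∫ u in Ioo 0 1, |qf μ u - qf ν u| :=
    (lAWr_dirac_le_integral hm.1.2.1).trans_eq (integral_congr_ae hval)
  have hopt := le_antisymm hupper (hlower m hm)
  exact ⟨fun m' hm' => hopt ▸ hlower m' hm', hopt⟩

/-- Proposition `HFmartrearrangementlifted`: for `μ ≤_cx ν`, any lifted
martingale coupling with kernel `m` satisfying `∫ |y - F_ν^{-1}(u)| m_u(dy) = |F_μ^{-1}(u) -
F_ν^{-1}(u)|` a.e. is a lifted martingale rearrangement coupling of the lifted Hoeffding–Fréchet
coupling (with kernel `u ↦ δ_{F_ν^{-1}(u)}`), and the optimal value is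
`∫_{(0,1)} |F_μ^{-1}(u) - F_ν^{-1}(u)| du`. -/
theorem stmt9
    (μ ν : Measure ℝ) [IsProbabilityMeasure μ] [IsProbabilityMeasure ν]
    (hμ1 : Integrable (fun x => |x|) μ) (hν1 : Integrable (fun x => |x|) ν)
    (hcx : ConvexOrder μ ν)
    (m : ℝ → Measure ℝ) (hm : IsLiftedMartingale μ ν m)
    (hval : ∀ᵐ u ∂lam01, (∫ y, |y - qf ν u| ∂(m u)) = |qf μ u - qf ν u|) :
    (∀ m' : ℝ → Measure ℝ, IsLiftedMartingale μ ν m' →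
      lAWr 1 μ (fun u => Measure.dirac (qf ν u)) μ m ≤
        lAWr 1 μ (fun u => Measure.dirac (qf ν u)) μ m') ∧
    lAWr 1 μ (fun u => Measure.dirac (qf ν u)) μ m =
      ∫ u in Set.Ioo (0 : ℝ) 1, |qf μ u - qf ν u| :=
  stmt9_general μ ν hμ1 hν1 m hm hval
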